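/- Let f ≥ 3, K = ℚ(ζ_f), and n = φ(f) ≥ 2, with ring of integers O_K = ℤ[ζ_f]. For every d ≥ 1 and every d × d unitriangular matrix M over K, there exists a d × d unitriangular matrix U with entries in O_K such that, with ‖·‖ the operator norm induced by the embedding of K^d into ℂ^{nd} via the n complex embeddings of K, both ‖MU‖ ≤ (n^{3/2}·d)^{⌈log₂ d⌉} and ‖(MU)⁻¹‖ ≤ (n^{3/2}·d)^{⌈log₂ d⌉}. -/

import Mathlib

/-!
Seysen's recursive size reduction. Put `r = φ(f)/2` and `L = ⌈log₂ d⌉`. Write the unitriangular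
`M` as `[[A, B], [0, C]]` with diagonal blocks of sizes `⌈d/2⌉` and `⌊d/2⌋`, and reduce `A` and
`C` recursively, so that `R_A = A U_A`, `R_C = C U_C` and their inverses have entries of house at
most `c = (r d)^(L-1)`. For `U = [[U_A, -U_A V], [0, U_C]]` one gets
`M U = [[R_A, R_A E], [0, R_C]]` and `(M U)⁻¹ = [[R_A⁻¹, -E R_C⁻¹], [0, R_C⁻¹]]`
with `E = R_A⁻¹ B U_C - V`. Rounding the coordinates of `R_A⁻¹ B U_C` in the power basis of `ζ_f`
yields an integral `V` for which every entry of `E` has house at most `r`, so the entries of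
`M U` and `(M U)⁻¹` have house at most `d r c = (r d)^L`. The embedded matrix is block diagonal,
so its operator norm is at most its Frobenius norm `√n d (r d)^L ≤ (n^(3/2) d)^L`.
-/

open Matrix
open scoped Matrix.Norms.L2Operator Classical

noncomputable instance (f : ℕ+) : NumberField (CyclotomicField f ℚ) :=
  letI := CyclotomicField.algebra (f : ℕ) ℚ
  IsCyclotomicExtension.numberField {(f : ℕ)} ℚ (CyclotomicField f ℚ)

/-- The complex matrix describing the `ℂ`-linear action of a matrix `A` over a number field
`K` on `ℂ^{nd}`, where `K^d` is embedded into `ℂ^{nd}` via the `n` complex embeddings of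
`K`. -/
noncomputable def embMatrix {K : Type*} [Field K] {d : ℕ}
    (A : Matrix (Fin d) (Fin d) K) :
    Matrix ((K →+* ℂ) × Fin d) ((K →+* ℂ) × Fin d) ℂ :=
  Matrix.of fun p q => if p.1 = q.1 then p.1 (A p.2 q.2) else 0

open NumberField

theorem Matrix.l2_opNorm_le_sqrt_sum_sq {m n 𝕜 : Type*} [Fintype m] [Fintype n] [DecidableEq n]
    [RCLike 𝕜] (A : Matrix m n 𝕜) : ‖A‖ ≤ √(∑ i, ∑ j, ‖A i j‖ ^ 2) := by
  have hfrob : @norm _ frobeniusNormedAddCommGroup.toNorm A = √(∑ i, ∑ j, ‖A i j‖ ^ 2) := by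
    simp only [frobenius_norm_def, Real.sqrt_eq_rpow, ← Real.rpow_natCast, Nat.cast_ofNat]
  rw [l2_opNorm_def]
  refine ContinuousLinearMap.opNorm_le_bound _ (by positivity) fun x => ?_
  -- `‖A x‖₂ ≤ ‖A‖_F ‖x‖₂` is submultiplicativity of the Frobenius norm applied to `A * col x`.
  have hcol := frobenius_norm_mul A (replicateCol Unit x.ofLp)
  rwa [← replicateCol_mulVec, frobenius_norm_replicateCol, frobenius_norm_replicateCol,
    hfrob] at hcol

theorem Module.Basis.exists_integral_norm_embedding_sub_le {K ι : Type*} [Field K] [Algebra ℚ K]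
    [Fintype ι] (b : Module.Basis ι ℚ K) (hb : ∀ i, IsIntegral ℤ (b i)) (x : K) :
    ∃ a : 𝓞 K, ∀ σ : K →+* ℂ, ‖σ (x - a)‖ ≤ (∑ i, ‖σ (b i)‖) / 2 := by
  set c := b.repr x
  refine ⟨⟨∑ i, round (c i) • b i, IsIntegral.sum _ fun i _ => (hb i).zsmul _⟩, fun σ => ?_⟩
  have hsub : x - ∑ i, round (c i) • b i = ∑ i, (c i - round (c i)) • b i := by
    conv_lhs => rw [← b.sum_repr x]
    simp only [sub_smul, Finset.sum_sub_distrib, Int.cast_smul_eq_zsmul]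
    rfl
  calc ‖σ (x - ∑ i, round (c i) • b i)‖
      = ‖∑ i, ((c i - round (c i) : ℚ) : ℂ) * σ (b i)‖ := by
        rw [hsub, map_sum]; simp only [map_rat_smul, Rat.smul_def]
    _ ≤ ∑ i, |c i - round (c i)| * ‖σ (b i)‖ := by
        refine (norm_sum_le _ _).trans (le_of_eq ?_)
        simp only [norm_mul, Complex.norm_ratCast, Rat.cast_abs]
    _ ≤ ∑ i, 1 / 2 * ‖σ (b i)‖ := by
        gcongr with i
        exact ((Rat.cast_le (K := ℝ)).2 (abs_sub_round (c i))).trans_eq (by norm_num)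
    _ = (∑ i, ‖σ (b i)‖) / 2 := by rw [← Finset.mul_sum]; ring

namespace NumberField

variable {K : Type*} [Field K] [NumberField K]

theorem house_neg (x : K) : house (-x) = house x := by
  simp only [house, map_neg, norm_neg]

theorem house_le_of_forall_norm_embedding_le {x : K} {c : ℝ}
    (h : ∀ σ : K →+* ℂ, ‖σ x‖ ≤ c) : house x ≤ c :=
  (pi_norm_le_iff_of_nonempty _).2 h

end NumberField

namespace CyclotomicField

/- The instance `Algebra ℚ (CyclotomicField f ℚ)` found by default is `DivisionRing.toRatAlgebra`,
while the cyclotomic API is stated for `CyclotomicField.algebra`; the two agree only up to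
`Subsingleton`, hence the local `let` below. -/
theorem finrank_rat (f : ℕ+) : Module.finrank ℚ (CyclotomicField f ℚ) = (f : ℕ).totient := by
  let := CyclotomicField.algebra (f : ℕ) ℚ
  rw [← IsCyclotomicExtension.finrank (CyclotomicField f ℚ)
    (Polynomial.cyclotomic.irreducible_rat f.pos)]
  congr!

theorem exists_integral_house_sub_le (f : ℕ+) (x : CyclotomicField f ℚ) :
    ∃ a : 𝓞 (CyclotomicField f ℚ), house (x - a) ≤ (f : ℕ).totient / 2 := by
  let := CyclotomicField.algebra (f : ℕ) ℚ
  have hζ := IsCyclotomicExtension.zeta_spec f ℚ (CyclotomicField f ℚ)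
  set B := hζ.powerBasis ℚ
  have hB : ∀ i, B.basis i = IsCyclotomicExtension.zeta f ℚ (CyclotomicField f ℚ) ^ (i : ℕ) :=
    fun i => by rw [B.coe_basis]; rfl
  obtain ⟨a, ha⟩ := B.basis.exists_integral_norm_embedding_sub_le
    (fun i => hB i ▸ (hζ.isIntegral f.pos).pow _) x
  refine ⟨a, house_le_of_forall_norm_embedding_le fun σ => (ha σ).trans_eq ?_⟩
  have hdim : B.dim = (f : ℕ).totient := by
    rw [← B.finrank, IsCyclotomicExtension.finrank _ (Polynomial.cyclotomic.irreducible_rat f.pos)]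
  have hσ : ∀ i, ‖σ (B.basis i)‖ = 1 := fun i => by
    rw [hB, map_pow, norm_pow, (hζ.map_of_injective σ.injective).norm'_eq_one f.ne_zero, one_pow]
  simp only [hσ, Finset.sum_const, Finset.card_univ, Fintype.card_fin, hdim, nsmul_eq_mul,
    mul_one]

end CyclotomicField

theorem Nat.exists_add_clog_eq_succ {d : ℕ} (hd : 2 ≤ d) :
    ∃ a b, d = a + b ∧ 0 < b ∧ b ≤ a ∧ Nat.clog 2 (a + b) = Nat.clog 2 a + 1 :=
  ⟨d - d / 2, d / 2, by omega, by omega, by omega, by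
    rw [Nat.sub_add_cancel (Nat.div_le_self _ _), Nat.clog_of_two_le one_lt_two hd]
    congr 2; omega⟩

theorem mul_pow_clog_le_mul_pow_clog {r : ℝ} {k a d : ℕ} (hr : 0 ≤ r) (hrd : 1 ≤ r * d)
    (hka : k ≤ a) (hkd : k ≤ d) : (r * k) ^ Nat.clog 2 k ≤ (r * d) ^ Nat.clog 2 a :=
  (pow_le_pow_left₀ (by positivity) (by gcongr) _).trans
    (pow_le_pow_right₀ hrd (Nat.clog_mono_right 2 hka))

theorem sqrt_mul_mul_half_pow_clog_le {n d : ℕ} (hn : 1 ≤ n) (hd : 2 ≤ d) :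
    √n * d * (n / 2 * d : ℝ) ^ Nat.clog 2 d ≤ ((n : ℝ) ^ ((3 : ℝ) / 2) * d) ^ Nat.clog 2 d := by
  set L := Nat.clog 2 d
  have h32 : (n : ℝ) ^ ((3 : ℝ) / 2) = 2 * √n * (n / 2) := by
    rw [show (3 : ℝ) / 2 = 1 + 1 / 2 by norm_num, Real.rpow_add (by positivity), Real.rpow_one,
      ← Real.sqrt_eq_rpow]
    ring
  calc √n * d * (n / 2 * d : ℝ) ^ L ≤ (2 * √n) ^ L * (n / 2 * d : ℝ) ^ L := by
        gcongr
        rw [mul_pow, mul_comm]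
        exact mul_le_mul (by exact_mod_cast Nat.le_pow_clog one_lt_two d)
          (le_self_pow₀ (Real.one_le_sqrt.2 (by exact_mod_cast hn))
            (Nat.clog_pos one_lt_two hd).ne') (by positivity) (by positivity)
    _ = ((n : ℝ) ^ ((3 : ℝ) / 2) * d) ^ L := by rw [h32, ← mul_pow]; ring_nf

namespace Matrix

section Unitriangular

variable {ι R : Type*}

structure IsUnitriangular [LT ι] [Zero R] [One R] (A : Matrix ι ι R) : Prop where
  isUpperTriangular : A.IsUpperTriangular
  diag_eq_one : ∀ i, A i i = 1

theorem isUnitriangular_one [Preorder ι] [DecidableEq ι] [Zero R] [One R] :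
    (1 : Matrix ι ι R).IsUnitriangular :=
  ⟨blockTriangular_one, fun _ => one_apply_eq _⟩

namespace IsUnitriangular

theorem mul [LinearOrder ι] [Fintype ι] [Semiring R] {A B : Matrix ι ι R}
    (hA : A.IsUnitriangular) (hB : B.IsUnitriangular) : (A * B).IsUnitriangular := by
  refine ⟨hA.isUpperTriangular.mul hB.isUpperTriangular, fun i => ?_⟩
  rw [mul_apply, Finset.sum_eq_single i, hA.diag_eq_one, hB.diag_eq_one, one_mul]
  · intro k _ hki
    obtain hlt | hlt := lt_or_gt_of_ne hki
    · rw [hA.isUpperTriangular hlt, zero_mul]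
    · rw [hB.isUpperTriangular hlt, mul_zero]
  · simp

theorem det_eq_one [LinearOrder ι] [Fintype ι] [DecidableEq ι] [CommRing R] {A : Matrix ι ι R}
    (hA : A.IsUnitriangular) : A.det = 1 := by
  simp [det_of_isUpperTriangular hA.isUpperTriangular, hA.diag_eq_one]

theorem eq_one [LT ι] [DecidableEq ι] [Subsingleton ι] [Zero R] [One R] {A : Matrix ι ι R}
    (hA : A.IsUnitriangular) : A = 1 := by
  ext i j
  rw [Subsingleton.elim i j, hA.diag_eq_one, one_apply_eq]

theorem map [LT ι] {S : Type*} [Semiring R] [Semiring S] {A : Matrix ι ι R}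
    (hA : A.IsUnitriangular) (f : R →+* S) : (A.map f).IsUnitriangular :=
  ⟨hA.isUpperTriangular.map f, fun i => by simp [hA.diag_eq_one]⟩

theorem submatrix {κ : Type*} [Preorder ι] [Preorder κ] [Zero R] [One R] {A : Matrix ι ι R}
    (hA : A.IsUnitriangular) {e : κ → ι} (he : StrictMono e) :
    (A.submatrix e e).IsUnitriangular :=
  ⟨fun _ _ hij => hA.isUpperTriangular (he hij), fun _ => hA.diag_eq_one _⟩

variable [Zero R] [One R] {a b : ℕ}

theorem exists_eq_reindex_fromBlocks {M : Matrix (Fin (a + b)) (Fin (a + b)) R}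
    (hM : M.IsUnitriangular) :
    ∃ (A : Matrix (Fin a) (Fin a) R) (B : Matrix (Fin a) (Fin b) R)
      (C : Matrix (Fin b) (Fin b) R), A.IsUnitriangular ∧ C.IsUnitriangular ∧
        M = reindex finSumFinEquiv finSumFinEquiv (fromBlocks A B 0 C) := by
  refine ⟨_, M.submatrix (Fin.castAdd b) (Fin.natAdd a), _,
    hM.submatrix (Fin.strictMono_castAdd b), hM.submatrix (Fin.strictMono_natAdd a), ?_⟩
  have hlow : M.submatrix (Fin.natAdd a) (Fin.castAdd b) = 0 := by
    ext i j
    exact hM.isUpperTriangular (by simp [Fin.lt_def]; omega)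
  ext i j
  induction i using Fin.addCases <;> induction j using Fin.addCases <;> simp [← hlow]

theorem reindex_fromBlocks {A : Matrix (Fin a) (Fin a) R} {C : Matrix (Fin b) (Fin b) R}
    (hA : A.IsUnitriangular) (hC : C.IsUnitriangular) (B : Matrix (Fin a) (Fin b) R) :
    (reindex finSumFinEquiv finSumFinEquiv (fromBlocks A B 0 C)).IsUnitriangular := by
  refine ⟨fun i j hij => ?_, fun i => ?_⟩
  · induction i using Fin.addCases <;> induction j using Fin.addCases <;>
      simp only [id_eq, Fin.lt_def, Fin.val_castAdd, Fin.val_natAdd] at hij <;>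
      simp only [reindex_apply, submatrix_apply, finSumFinEquiv_symm_apply_castAdd,
        finSumFinEquiv_symm_apply_natAdd, fromBlocks_apply₁₁, fromBlocks_apply₂₁,
        fromBlocks_apply₂₂, zero_apply]
    · exact hA.isUpperTriangular (Fin.lt_def.2 hij)
    · omega
    · exact hC.isUpperTriangular (Fin.lt_def.2 (by simpa using hij))
  · induction i using Fin.addCases <;> simp [hA.diag_eq_one, hC.diag_eq_one]

end IsUnitriangular

end Unitriangular

theorem fromBlocks_zero₂₁_mul_fromBlocks_zero₂₁_neg {m n α : Type*} [Fintype m] [Fintype n]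
    [DecidableEq m] [CommRing α] {A UA : Matrix m m α} (B : Matrix m n α) {C UC : Matrix n n α}
    (V : Matrix m n α) (h : IsUnit (A * UA).det) :
    fromBlocks A B 0 C * fromBlocks UA (-(UA * V)) 0 UC =
      fromBlocks (A * UA) (A * UA * ((A * UA)⁻¹ * (B * UC) - V)) 0 (C * UC) := by
  rw [fromBlocks_multiply, Matrix.mul_sub, ← Matrix.mul_assoc (A * UA), mul_nonsing_inv _ h]
  simp [Matrix.mul_assoc, sub_eq_neg_add]

theorem norm_embMatrix_one_le {K : Type*} [Field K] [Fintype (K →+* ℂ)] {d : ℕ} :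
    ‖embMatrix (1 : Matrix (Fin d) (Fin d) K)‖ ≤ 1 := by
  have h1 : embMatrix (1 : Matrix (Fin d) (Fin d) K) = 1 := by
    ext ⟨σ, i⟩ ⟨τ, j⟩
    by_cases hστ : σ = τ <;> by_cases hij : i = j <;> simp [embMatrix, one_apply, hστ, hij]
  rw [h1, cstar_norm_def, _root_.map_one]
  exact ContinuousLinearMap.norm_id_le

section HouseBounded

variable {K : Type*} [Field K] [NumberField K] {l m n o : Type*}

def HouseBounded (c : ℝ) (A : Matrix m n K) : Prop :=
  ∀ i j, house (A i j) ≤ c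

theorem houseBounded_zero {c : ℝ} (hc : 0 ≤ c) : (0 : Matrix m n K).HouseBounded c :=
  fun _ _ => by simpa [house] using hc

theorem houseBounded_one [DecidableEq n] : (1 : Matrix n n K).HouseBounded 1 := fun i j => by
  by_cases h : i = j
  · subst h
    simpa using (house_intCast (K := K) 1).le
  · simp [one_apply_ne h, house]

theorem exists_houseBounded_sub_map {r : ℝ} (hround : ∀ x : K, ∃ a : 𝓞 K, house (x - a) ≤ r)
    (Y : Matrix m n K) :
    ∃ V : Matrix m n (𝓞 K), (Y - V.map (algebraMap (𝓞 K) K)).HouseBounded r := by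
  choose g hg using fun i j => hround (Y i j)
  exact ⟨of g, fun i j => hg i j⟩

namespace HouseBounded

variable {c c' : ℝ}

theorem mono {A : Matrix m n K} (hA : A.HouseBounded c) (hc : c ≤ c') : A.HouseBounded c' :=
  fun i j => (hA i j).trans hc

theorem neg {A : Matrix m n K} (hA : A.HouseBounded c) : (-A).HouseBounded c :=
  fun i j => by simpa [house_neg] using hA i j

theorem submatrix {A : Matrix m n K} (hA : A.HouseBounded c) (e₁ : l → m) (e₂ : o → n) :
    (A.submatrix e₁ e₂).HouseBounded c :=
  fun _ _ => hA _ _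

theorem mul [Fintype m] {A : Matrix l m K} {B : Matrix m n K} (hA : A.HouseBounded c)
    (hB : B.HouseBounded c') : (A * B).HouseBounded (Fintype.card m * (c * c')) := fun i j =>
  calc house ((A * B) i j) ≤ ∑ k, house (A i k) * house (B k j) :=
        (house_sum_le_sum_house _ _).trans (Finset.sum_le_sum fun _ _ => house_mul_le _ _)
    _ ≤ ∑ _k : m, c * c' := Finset.sum_le_sum fun k _ =>
        mul_le_mul (hA i k) (hB k j) (house_nonneg _) ((house_nonneg _).trans (hA i k))
    _ = Fintype.card m * (c * c') := by simp

theorem fromBlocks {A : Matrix l n K} {B : Matrix l o K} {C : Matrix m n K} {D : Matrix m o K}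
    (hA : A.HouseBounded c) (hB : B.HouseBounded c) (hC : C.HouseBounded c)
    (hD : D.HouseBounded c) : (fromBlocks A B C D).HouseBounded c := by
  rintro (i | i) (j | j)
  exacts [hA i j, hB i j, hC i j, hD i j]

theorem fromBlocks_zero₂₁_and_inv [Fintype m] [Fintype n] [DecidableEq m] [DecidableEq n]
    {R : Matrix m m K} {S : Matrix n n K} {E : Matrix m n K} {r : ℝ}
    (hR : IsUnit R.det) (hS : IsUnit S.det) (hRc : R.HouseBounded c) (hRc' : R⁻¹.HouseBounded c)
    (hSc : S.HouseBounded c) (hSc' : S⁻¹.HouseBounded c) (hE : E.HouseBounded r) (hc : 0 ≤ c)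
    (hrmn : 1 ≤ r * (Fintype.card m + Fintype.card n)) :
    (Matrix.fromBlocks R (R * E) 0 S).HouseBounded (r * (Fintype.card m + Fintype.card n) * c) ∧
      (Matrix.fromBlocks R (R * E) 0 S)⁻¹.HouseBounded
        (r * (Fintype.card m + Fintype.card n) * c) := by
  have hr : 0 ≤ r := by
    by_contra! h
    nlinarith [mul_nonpos_of_nonpos_of_nonneg h.le
      (by positivity : (0 : ℝ) ≤ Fintype.card m + Fintype.card n)]
  have hdiag : c ≤ r * (Fintype.card m + Fintype.card n) * c := le_mul_of_one_le_left hc hrmn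
  have hm : Fintype.card m * (c * r) ≤ r * (Fintype.card m + Fintype.card n) * c := by
    nlinarith [mul_nonneg (mul_nonneg hr (Nat.cast_nonneg (Fintype.card n))) hc]
  have hn : Fintype.card n * (r * c) ≤ r * (Fintype.card m + Fintype.card n) * c := by
    nlinarith [mul_nonneg (mul_nonneg hr (Nat.cast_nonneg (Fintype.card m))) hc]
  have h0 := houseBounded_zero (m := n) (n := m) (K := K) (hc.trans hdiag)
  constructor
  · exact (hRc.mono hdiag).fromBlocks ((hRc.mul hE).mono hm) h0 (hSc.mono hdiag)
  · rw [inv_fromBlocks_zero₂₁_of_isUnit_iff _ _ _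
        (iff_of_true ((isUnit_iff_isUnit_det R).2 hR) ((isUnit_iff_isUnit_det S).2 hS)),
      ← Matrix.mul_assoc, nonsing_inv_mul _ hR, Matrix.one_mul]
    exact (hRc'.mono hdiag).fromBlocks ((hE.mul hSc').neg.mono hn) h0 (hSc'.mono hdiag)

theorem norm_embMatrix_le {d : ℕ} {A : Matrix (Fin d) (Fin d) K} (hc : 0 ≤ c)
    (hA : A.HouseBounded c) : ‖embMatrix A‖ ≤ √(Module.finrank ℚ K) * d * c := by
  have hsum : ∑ p, ∑ q, ‖embMatrix A p q‖ ^ 2 = ∑ σ : K →+* ℂ, ∑ i, ∑ j, ‖σ (A i j)‖ ^ 2 := by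
    simp [embMatrix, Fintype.sum_prod_type, apply_ite]
  have hle : ∑ σ : K →+* ℂ, ∑ i, ∑ j, ‖σ (A i j)‖ ^ 2 ≤ Module.finrank ℚ K * (d * c) ^ 2 :=
    calc ∑ σ : K →+* ℂ, ∑ i, ∑ j, ‖σ (A i j)‖ ^ 2
        ≤ ∑ _σ : K →+* ℂ, ∑ _i : Fin d, ∑ _j : Fin d, c ^ 2 := by
          gcongr with σ _ i _ j _
          exact (norm_embedding_le_house _ σ).trans (hA i j)
      _ = Module.finrank ℚ K * (d * c) ^ 2 := by
          simp only [Finset.sum_const, Finset.card_univ, Fintype.card_fin, Embeddings.card,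
            nsmul_eq_mul]
          ring
  calc ‖embMatrix A‖ ≤ √(Module.finrank ℚ K * (d * c) ^ 2) :=
        (l2_opNorm_le_sqrt_sum_sq _).trans (Real.sqrt_le_sqrt (hsum ▸ hle))
    _ = √(Module.finrank ℚ K) * d * c := by
        rw [Real.sqrt_mul (by positivity), Real.sqrt_sq (by positivity), mul_assoc]

theorem norm_embMatrix_le_pow_clog {d : ℕ} (hd : 2 ≤ d) {A : Matrix (Fin d) (Fin d) K}
    (hA : A.HouseBounded ((Module.finrank ℚ K / 2 * d : ℝ) ^ Nat.clog 2 d)) :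
    ‖embMatrix A‖ ≤ ((Module.finrank ℚ K : ℝ) ^ ((3 : ℝ) / 2) * d) ^ Nat.clog 2 d :=
  (hA.norm_embMatrix_le (by positivity)).trans
    (sqrt_mul_mul_half_pow_clog_le Module.finrank_pos hd)

end HouseBounded

end HouseBounded

theorem IsUnitriangular.exists_houseBounded_mul {K : Type*} [Field K] [NumberField K] {r : ℝ}
    (hr : 1 ≤ 2 * r) (hround : ∀ x : K, ∃ a : 𝓞 K, house (x - a) ≤ r) {d : ℕ}
    {M : Matrix (Fin d) (Fin d) K} (hM : M.IsUnitriangular) :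
    ∃ U : Matrix (Fin d) (Fin d) (𝓞 K), U.IsUnitriangular ∧
      (M * U.map (algebraMap (𝓞 K) K)).HouseBounded ((r * d) ^ Nat.clog 2 d) ∧
      (M * U.map (algebraMap (𝓞 K) K))⁻¹.HouseBounded ((r * d) ^ Nat.clog 2 d) := by
  induction d using Nat.strong_induction_on with
  | _ d ih =>
  obtain hd | hd := le_or_gt d 1
  · have := Fin.subsingleton_iff_le_one.2 hd
    refine ⟨1, isUnitriangular_one, ?_⟩
    simp only [hM.eq_one, Matrix.map_one _ (map_zero _) (map_one _), Matrix.one_mul, inv_one,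
      Nat.clog_of_right_le_one hd, pow_zero]
    exact ⟨houseBounded_one, houseBounded_one⟩
  obtain ⟨a, b, rfl, hb, hba, hclog⟩ := Nat.exists_add_clog_eq_succ hd
  obtain ⟨A, B, C, hA, hC, rfl⟩ := hM.exists_eq_reindex_fromBlocks
  obtain ⟨UA, hUA, hRA, hRA'⟩ := ih a (by omega) hA
  obtain ⟨UC, hUC, hRC, hRC'⟩ := ih b (by omega) hC
  set φ := algebraMap (𝓞 K) K
  obtain ⟨V, hV⟩ := exists_houseBounded_sub_map hround ((A * UA.map φ)⁻¹ * (B * UC.map φ))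
  have hdetA : IsUnit (A * UA.map φ).det := by simp [(hA.mul (hUA.map φ)).det_eq_one]
  have hdetC : IsUnit (C * UC.map φ).det := by simp [(hC.mul (hUC.map φ)).det_eq_one]
  have hrd : 1 ≤ r * ((a + b : ℕ) : ℝ) := by
    have : (2 : ℝ) ≤ (a + b : ℕ) := by exact_mod_cast hd
    nlinarith
  have hr0 : 0 ≤ r := by linarith
  have hbound := HouseBounded.fromBlocks_zero₂₁_and_inv hdetA hdetC
    (hRA.mono (mul_pow_clog_le_mul_pow_clog hr0 hrd le_rfl (by omega)))
    (hRA'.mono (mul_pow_clog_le_mul_pow_clog hr0 hrd le_rfl (by omega)))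
    (hRC.mono (mul_pow_clog_le_mul_pow_clog hr0 hrd hba (by omega)))
    (hRC'.mono (mul_pow_clog_le_mul_pow_clog hr0 hrd hba (by omega))) hV (by positivity)
    (by simpa using hrd)
  simp only [Fintype.card_fin, ← Nat.cast_add] at hbound
  refine ⟨reindex finSumFinEquiv finSumFinEquiv (fromBlocks UA (-(UA * V)) 0 UC),
    hUA.reindex_fromBlocks hUC _, ?_⟩
  simp only [reindex_apply, ← submatrix_map, fromBlocks_map, Matrix.map_neg _ (map_neg φ),
    Matrix.map_mul, Matrix.map_zero _ (map_zero φ), submatrix_mul_equiv, inv_submatrix_equiv,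
    fromBlocks_zero₂₁_mul_fromBlocks_zero₂₁_neg B _ hdetA, hclog, pow_succ']
  exact ⟨hbound.1.submatrix _ _, hbound.2.submatrix _ _⟩

end Matrix

theorem seysen_size_reduction_exists_general (f : ℕ+) (d : ℕ)
    (M : Matrix (Fin d) (Fin d) (CyclotomicField f ℚ))
    (hM : M.BlockTriangular id) (hMdiag : ∀ i, M i i = 1) :
    ∃ U : Matrix (Fin d) (Fin d) (CyclotomicField f ℚ),
      U.BlockTriangular id ∧ (∀ i, U i i = 1) ∧
      (∀ i j, IsIntegral ℤ (U i j)) ∧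
      ‖embMatrix (M * U)‖ ≤
        ((Nat.totient (f : ℕ) : ℝ) ^ ((3 : ℝ) / 2) * (d : ℝ)) ^ (Nat.clog 2 d) ∧
      ‖embMatrix (M * U)⁻¹‖ ≤
        ((Nat.totient (f : ℕ) : ℝ) ^ ((3 : ℝ) / 2) * (d : ℝ)) ^ (Nat.clog 2 d) := by
  have hM' : M.IsUnitriangular := ⟨hM, hMdiag⟩
  have hn : (1 : ℝ) ≤ 2 * ((f : ℕ).totient / 2) := by
    rw [mul_div_cancel₀ _ two_ne_zero]; exact_mod_cast Nat.totient_pos.2 f.pos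
  obtain ⟨U, hU, hMU, hMU'⟩ :=
    hM'.exists_houseBounded_mul hn (CyclotomicField.exists_integral_house_sub_le f)
  refine ⟨U.map (algebraMap _ _), (hU.map _).isUpperTriangular, (hU.map _).diag_eq_one,
    fun i j => RingOfIntegers.isIntegral_coe _, ?_⟩
  obtain hd | hd := le_or_gt d 1
  · have := Fin.subsingleton_iff_le_one.2 hd
    rw [(hM'.mul (hU.map _)).eq_one, inv_one, Nat.clog_of_right_le_one hd, pow_zero]
    exact ⟨norm_embMatrix_one_le, norm_embMatrix_one_le⟩
  rw [← CyclotomicField.finrank_rat f] at hMU hMU' ⊢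
  exact ⟨hMU.norm_embMatrix_le_pow_clog hd, hMU'.norm_embMatrix_le_pow_clog hd⟩

/-- Seysen size-reduction over cyclotomic fields (exact arithmetic): every unitriangular
matrix `M` over `ℚ(ζ_f)` admits an integral unitriangular transformation `U` such that both
`‖MU‖` and `‖(MU)⁻¹‖` are at most `(n^{3/2} d)^{⌈log₂ d⌉}` for the operator norm induced by
the canonical embedding into `ℂ^{nd}`. -/
theorem seysen_size_reduction_exists (f : ℕ+) (hf : 3 ≤ (f : ℕ)) (d : ℕ) (hd : 1 ≤ d)
    (M : Matrix (Fin d) (Fin d) (CyclotomicField f ℚ))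
    (hM : M.BlockTriangular id) (hMdiag : ∀ i, M i i = 1) :
    ∃ U : Matrix (Fin d) (Fin d) (CyclotomicField f ℚ),
      U.BlockTriangular id ∧ (∀ i, U i i = 1) ∧
      (∀ i j, IsIntegral ℤ (U i j)) ∧
      ‖embMatrix (M * U)‖ ≤
        ((Nat.totient (f : ℕ) : ℝ) ^ ((3 : ℝ) / 2) * (d : ℝ)) ^ (Nat.clog 2 d) ∧
      ‖embMatrix (M * U)⁻¹‖ ≤
        ((Nat.totient (f : ℕ) : ℝ) ^ ((3 : ℝ) / 2) * (d : ℝ)) ^ (Nat.clog 2 d) :=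
  seysen_size_reduction_exists_general f d M hM hMdiag
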